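/- Correctness of the full prenexing transformation: for every QBF φ and Q ∈ {∃,∀}, the formula Q N(φ) tr^Q(φ) is logically equivalent to φ, where tr^Q(φ) = φ if φ is boolean, and tr^Q(φ) = Q' (P(φ) ∪ N(T^Q(φ))) tr^{Q'}(T^Q(φ)) otherwise, Q' being the dual of Q. Consequently φ and tr^∃(φ) are equisatisfiable, and φ and tr^∀(φ) are equivalid. -/

import Mathlib

/-- Syntax of full quantified boolean formulas. -/
inductive Fml : Type where
  | var : ℕ → Fml
  | tru : Fml
  | fls : Fml
  | neg : Fml → Fml
  | conj : Fml → Fml → Fml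
  | disj : Fml → Fml → Fml
  | imp : Fml → Fml → Fml
  | biff : Fml → Fml → Fml
  | qex : Finset ℕ → Fml → Fml
  | qall : Finset ℕ → Fml → Fml
  deriving DecidableEq

namespace Fml

/-- Satisfaction of a formula by a valuation. -/
def Sat : (ℕ → Bool) → Fml → Prop
  | V, var p => V p = true
  | _, tru => True
  | _, fls => False
  | V, neg φ => ¬ Sat V φ
  | V, conj φ ψ => Sat V φ ∧ Sat V ψ
  | V, disj φ ψ => Sat V φ ∨ Sat V ψ
  | V, imp φ ψ => Sat V φ → Sat V ψ
  | V, biff φ ψ => (Sat V φ ↔ Sat V ψ)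
  | V, qex X φ => ∃ W : ℕ → Bool, (∀ q ∉ X, W q = V q) ∧ Sat W φ
  | V, qall X φ => ∀ W : ℕ → Bool, (∀ q ∉ X, W q = V q) → Sat W φ

/-- Logical equivalence: same truth value under every valuation. -/
def Equiv (φ ψ : Fml) : Prop := ∀ V : ℕ → Bool, Sat V φ ↔ Sat V ψ

/-- All variables occurring (free or bound, including quantifier blocks). -/
def vars : Fml → Finset ℕ
  | var p => {p}
  | tru => ∅
  | fls => ∅
  | neg φ => vars φ
  | conj φ ψ => vars φ ∪ vars ψ
  | disj φ ψ => vars φ ∪ vars ψ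
  | imp φ ψ => vars φ ∪ vars ψ
  | biff φ ψ => vars φ ∪ vars ψ
  | qex X φ => X ∪ vars φ
  | qall X φ => X ∪ vars φ

/-- Free variables. -/
def freeVars : Fml → Finset ℕ
  | var p => {p}
  | tru => ∅
  | fls => ∅
  | neg φ => freeVars φ
  | conj φ ψ => freeVars φ ∪ freeVars ψ
  | disj φ ψ => freeVars φ ∪ freeVars ψ
  | imp φ ψ => freeVars φ ∪ freeVars ψ
  | biff φ ψ => freeVars φ ∪ freeVars ψ
  | qex X φ => freeVars φ \ X
  | qall X φ => freeVars φ \ X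

/-- Bound variables. -/
def boundVars : Fml → Finset ℕ
  | var _ => ∅
  | tru => ∅
  | fls => ∅
  | neg φ => boundVars φ
  | conj φ ψ => boundVars φ ∪ boundVars ψ
  | disj φ ψ => boundVars φ ∪ boundVars ψ
  | imp φ ψ => boundVars φ ∪ boundVars ψ
  | biff φ ψ => boundVars φ ∪ boundVars ψ
  | qex X φ => X ∪ boundVars φ
  | qall X φ => X ∪ boundVars φ

/-- Substitution of `ρ` for free occurrences of the variable `p`. -/
def subst (p : ℕ) (ρ : Fml) : Fml → Fml
  | var q => if q = p then ρ else var q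
  | tru => tru
  | fls => fls
  | neg φ => neg (subst p ρ φ)
  | conj φ ψ => conj (subst p ρ φ) (subst p ρ ψ)
  | disj φ ψ => disj (subst p ρ φ) (subst p ρ ψ)
  | imp φ ψ => imp (subst p ρ φ) (subst p ρ ψ)
  | biff φ ψ => biff (subst p ρ φ) (subst p ρ ψ)
  | qex X φ => qex X (if p ∈ X then φ else subst p ρ φ)
  | qall X φ => qall X (if p ∈ X then φ else subst p ρ φ)

/-- Simultaneous substitution given by an association list. -/
def simSubst (σ : List (ℕ × Fml)) : Fml → Fml
  | var q => ((σ.find? (fun e => e.1 == q)).map Prod.snd).getD (var q)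
  | tru => tru
  | fls => fls
  | neg φ => neg (simSubst σ φ)
  | conj φ ψ => conj (simSubst σ φ) (simSubst σ ψ)
  | disj φ ψ => disj (simSubst σ φ) (simSubst σ ψ)
  | imp φ ψ => imp (simSubst σ φ) (simSubst σ ψ)
  | biff φ ψ => biff (simSubst σ φ) (simSubst σ ψ)
  | qex X φ => qex X (simSubst (σ.filter (fun e => decide (e.1 ∉ X))) φ)
  | qall X φ => qall X (simSubst (σ.filter (fun e => decide (e.1 ∉ X))) φ)

/-- Conjunction of a list of formulas (`⊤` for the empty list). -/
def bigAnd : List Fml → Fml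
  | [] => tru
  | [φ] => φ
  | φ :: rest => conj φ (bigAnd rest)

/-- Length of a formula: variables and operators count 1, except that
negation does not count; a block `QX` contributes `1 + |X|`. -/
def len : Fml → ℕ
  | var _ => 1
  | tru => 1
  | fls => 1
  | neg φ => len φ
  | conj φ ψ => 1 + len φ + len ψ
  | disj φ ψ => 1 + len φ + len ψ
  | imp φ ψ => 1 + len φ + len ψ
  | biff φ ψ => 1 + len φ + len ψ
  | qex X φ => 1 + X.card + len φ
  | qall X φ => 1 + X.card + len φ

/-- Quantifier depth. -/
def md : Fml → ℕ
  | var _ => 0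
  | tru => 0
  | fls => 0
  | neg φ => md φ
  | conj φ ψ => max (md φ) (md ψ)
  | disj φ ψ => max (md φ) (md ψ)
  | imp φ ψ => max (md φ) (md ψ)
  | biff φ ψ => max (md φ) (md ψ)
  | qex _ φ => 1 + md φ
  | qall _ φ => 1 + md φ

/-- Number of quantifier blocks. -/
def nb : Fml → ℕ
  | var _ => 0
  | tru => 0
  | fls => 0
  | neg φ => nb φ
  | conj φ ψ => nb φ + nb ψ
  | disj φ ψ => nb φ + nb ψ
  | imp φ ψ => nb φ + nb ψ
  | biff φ ψ => nb φ + nb ψ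
  | qex _ φ => 1 + nb φ
  | qall _ φ => 1 + nb φ

/-- Total number of quantified variables (sum of block sizes). -/
def nv : Fml → ℕ
  | var _ => 0
  | tru => 0
  | fls => 0
  | neg φ => nv φ
  | conj φ ψ => nv φ + nv ψ
  | disj φ ψ => nv φ + nv ψ
  | imp φ ψ => nv φ + nv ψ
  | biff φ ψ => nv φ + nv ψ
  | qex X φ => X.card + nv φ
  | qall X φ => X.card + nv φ

/-- Boolean (quantifier-free) formulas. -/
def isBool : Fml → Bool
  | var _ => true
  | tru => true
  | fls => true
  | neg φ => isBool φ
  | conj φ ψ => isBool φ && isBool ψ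
  | disj φ ψ => isBool φ && isBool ψ
  | imp φ ψ => isBool φ && isBool ψ
  | biff φ ψ => isBool φ && isBool ψ
  | qex _ _ => false
  | qall _ _ => false

/-- Prenex form: a prefix of quantifier blocks followed by a boolean formula. -/
def IsPrenex : Fml → Prop
  | qex _ φ => IsPrenex φ
  | qall _ φ => IsPrenex φ
  | φ => isBool φ = true

end Fml

/-- Quantifiers. -/
inductive Quant : Type where
  | qex : Quant
  | qall : Quant
  deriving DecidableEq

/-- The dual of a quantifier. -/
def Quant.dual : Quant → Quant
  | .qex => .qall
  | .qall => .qex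

/-- Applying a quantifier block to a formula. -/
def qApply : Quant → Finset ℕ → Fml → Fml
  | .qex, X, φ => Fml.qex X φ
  | .qall, X, φ => Fml.qall X φ
open Fml in
/-- An entry `(p, Q, X, ψ)` abbreviates the quantified formula `QX ψ`. -/
def entryFml (e : ℕ × Quant × Finset ℕ × Fml) : Fml := qApply e.2.1 e.2.2.1 e.2.2.2

open Fml in
/-- A decomposition of `φ` into a boolean skeleton `β` and its outermost
quantified subformulas `QᵢXᵢφᵢ` abbreviated by fresh variables `pᵢ`,
together with a choice of fresh positive and negative copies `x⁺ᵢ`, `x⁻ᵢ`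
of the quantified variables (Fact 4 of the paper). -/
structure OneLevelData (φ : Fml) where
  β : Fml
  L : List (ℕ × Quant × Finset ℕ × Fml)
  posC : ℕ → ℕ → ℕ
  negC : ℕ → ℕ → ℕ
  hbool : β.isBool = true
  hdec : φ = simSubst (L.map (fun e => (e.1, entryFml e))) β
  hnodup : (L.map (fun e => e.1)).Nodup
  hpnotin : ∀ e ∈ L, e.1 ∉ vars φ
  hpnotfree : ∀ e ∈ L, ∀ e' ∈ L, e.1 ∉ freeVars e'.2.2.2
  hlen : len φ = len β + (L.map (fun e => e.2.2.1.card)).sum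
      + (L.map (fun e => len e.2.2.2)).sum
  hmd : md φ = (L.map (fun e => 1 + md e.2.2.2)).foldr max 0
  hcfresh : ∀ i : ℕ, ∀ e ∈ L[i]?, ∀ x ∈ e.2.2.1,
      posC i x ∉ vars φ ∧ negC i x ∉ vars φ ∧
      posC i x ∉ L.map (fun e => e.1) ∧ negC i x ∉ L.map (fun e => e.1)
  hcdist : ∀ i i' : ℕ, ∀ e ∈ L[i]?, ∀ e' ∈ L[i']?,
      ∀ x ∈ e.2.2.1, ∀ x' ∈ e'.2.2.1, ∀ b b' : Bool,
      (if b then posC i x else negC i x) = (if b' then posC i' x' else negC i' x') →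
      (i, x, b) = (i', x', b')

namespace OneLevelData

open Fml

variable {φ : Fml}

/-- `φᵢ[σᵢ]`: the body of the `i`-th entry with its quantified variables
renamed to their positive copies. -/
noncomputable def renameEntry (D : OneLevelData φ) (i : ℕ) (e : ℕ × Quant × Finset ℕ × Fml) : Fml :=
  simSubst (e.2.2.1.toList.map (fun x => (x, var (D.posC i x)))) e.2.2.2

/-- The linking constraint of the `i`-th entry:
`¬pᵢ → ⋀_{x∈Xᵢ}(x⁺ᵢ ↔ x⁻ᵢ)` if `Qᵢ = ∃` and
`pᵢ → ⋀_{x∈Xᵢ}(x⁺ᵢ ↔ x⁻ᵢ)` if `Qᵢ = ∀`. -/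
noncomputable def linkEntry (D : OneLevelData φ) (i : ℕ) (e : ℕ × Quant × Finset ℕ × Fml) : Fml :=
  match e.2.1 with
  | .qex => imp (neg (var e.1))
      (bigAnd (e.2.2.1.toList.map (fun x => biff (var (D.posC i x)) (var (D.negC i x)))))
  | .qall => imp (var e.1)
      (bigAnd (e.2.2.1.toList.map (fun x => biff (var (D.posC i x)) (var (D.negC i x)))))

/-- The defining and linking constraints
`⋀ᵢ (pᵢ ↔ φᵢ[σᵢ]) ∧ (linking constraints)`. -/
noncomputable def constraints (D : OneLevelData φ) : Fml :=
  conj (bigAnd ((D.L.zipIdx.map Prod.swap).map (fun ie => biff (var ie.2.1) (D.renameEntry ie.1 ie.2))))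
       (bigAnd ((D.L.zipIdx.map Prod.swap).map (fun ie => D.linkEntry ie.1 ie.2)))

/-- The one-level transformation `T^∀(φ)`. -/
noncomputable def Tall (D : OneLevelData φ) : Fml := conj D.constraints D.β

/-- The one-level transformation `T^∃(φ)`. -/
noncomputable def Tex (D : OneLevelData φ) : Fml := imp D.constraints D.β

/-- `T^Q(φ)`. -/
noncomputable def TQ (Q : Quant) (D : OneLevelData φ) : Fml :=
  match Q with
  | .qall => D.Tall
  | .qex => D.Tex

/-- `N(φ)`: the set of fresh negative copies. -/
def Nset (D : OneLevelData φ) : Finset ℕ :=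
  ((D.L.zipIdx.map Prod.swap).map (fun ie => ie.2.2.2.1.image (D.negC ie.1))).foldr (· ∪ ·) ∅

/-- `P(φ)`: the set of fresh positive copies together with the abbreviation
variables `pᵢ`. -/
def Pset (D : OneLevelData φ) : Finset ℕ :=
  ((D.L.zipIdx.map Prod.swap).map (fun ie => ie.2.2.2.1.image (D.posC ie.1) ∪ {ie.2.1})).foldr (· ∪ ·) ∅

end OneLevelData

open Fml OneLevelData in
/-- The full prenexing transformation `tr^Q`, with explicit fuel (the fuel
`md φ` always suffices since `md (T^Q(φ)) = md φ − 1` for non-boolean `φ`);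
`D` is a choice of one-level decomposition for every formula. -/
noncomputable def tr (D : ∀ ψ : Fml, OneLevelData ψ) : ℕ → Quant → Fml → Fml
  | 0, _, φ => φ
  | n + 1, Q, φ =>
    if φ.isBool then φ
    else
      let ψ := TQ Q (D φ)
      qApply Q.dual (Pset (D φ) ∪ Nset (D ψ)) (tr D n Q.dual ψ)

open Fml OneLevelData in
/-- The full prenexing transformation `tr^Q(φ)`. -/
noncomputable def trQ (D : ∀ ψ : Fml, OneLevelData ψ) (Q : Quant) (φ : Fml) : Fml :=
  tr D (md φ) Q φ

namespace Fml

lemma freeVars_subset_vars : ∀ ψ : Fml, freeVars ψ ⊆ vars ψ := by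
  intro ψ
  induction ψ with
  | var p => simp [freeVars, vars]
  | tru => simp [freeVars, vars]
  | fls => simp [freeVars, vars]
  | neg φ ih => simpa [freeVars, vars] using ih
  | conj φ ψ ih1 ih2 => simp only [freeVars, vars]; exact Finset.union_subset_union ih1 ih2
  | disj φ ψ ih1 ih2 => simp only [freeVars, vars]; exact Finset.union_subset_union ih1 ih2
  | imp φ ψ ih1 ih2 => simp only [freeVars, vars]; exact Finset.union_subset_union ih1 ih2
  | biff φ ψ ih1 ih2 => simp only [freeVars, vars]; exact Finset.union_subset_union ih1 ih2
  | qex X φ ih =>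
      simp only [freeVars, vars]
      exact (Finset.sdiff_subset).trans (ih.trans (Finset.subset_union_right))
  | qall X φ ih =>
      simp only [freeVars, vars]
      exact (Finset.sdiff_subset).trans (ih.trans (Finset.subset_union_right))

lemma sat_coincidence : ∀ (ψ : Fml) (V W : ℕ → Bool),
    (∀ x ∈ freeVars ψ, V x = W x) → (Sat V ψ ↔ Sat W ψ) := by
  intro ψ
  induction ψ with
  | var p => intro V W h; simp only [Sat, freeVars] at *; rw [h p (by simp)]
  | tru => intro V W h; simp [Sat]
  | fls => intro V W h; simp [Sat]
  | neg φ ih => intro V W h; simp only [Sat, freeVars] at *; rw [ih V W h]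
  | conj φ ψ ih1 ih2 =>
      intro V W h; simp only [Sat, freeVars] at *
      rw [ih1 V W (fun x hx => h x (Finset.mem_union_left _ hx)),
          ih2 V W (fun x hx => h x (Finset.mem_union_right _ hx))]
  | disj φ ψ ih1 ih2 =>
      intro V W h; simp only [Sat, freeVars] at *
      rw [ih1 V W (fun x hx => h x (Finset.mem_union_left _ hx)),
          ih2 V W (fun x hx => h x (Finset.mem_union_right _ hx))]
  | imp φ ψ ih1 ih2 =>
      intro V W h; simp only [Sat, freeVars] at *
      rw [ih1 V W (fun x hx => h x (Finset.mem_union_left _ hx)),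
          ih2 V W (fun x hx => h x (Finset.mem_union_right _ hx))]
  | biff φ ψ ih1 ih2 =>
      intro V W h; simp only [Sat, freeVars] at *
      rw [ih1 V W (fun x hx => h x (Finset.mem_union_left _ hx)),
          ih2 V W (fun x hx => h x (Finset.mem_union_right _ hx))]
  | qex X φ ih =>
      intro V W h; simp only [Sat, freeVars] at *
      constructor
      · rintro ⟨U, hU, hsat⟩
        refine ⟨fun y => if y ∈ X then U y else W y, fun q hq => by simp [hq], ?_⟩
        rw [← ih U _ ?_]
        · exact hsat
        · intro x hx
          by_cases hxX : x ∈ X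
          · simp [hxX]
          · have h1 := hU x hxX
            have h2 := h x (Finset.mem_sdiff.2 ⟨hx, hxX⟩)
            simp only [hxX, if_false]
            rw [h1, ← h2]
      · rintro ⟨U, hU, hsat⟩
        refine ⟨fun y => if y ∈ X then U y else V y, fun q hq => by simp [hq], ?_⟩
        rw [← ih U _ ?_]
        · exact hsat
        · intro x hx
          by_cases hxX : x ∈ X
          · simp [hxX]
          · have h1 := hU x hxX
            have h2 := h x (Finset.mem_sdiff.2 ⟨hx, hxX⟩)
            simp only [hxX, if_false]
            rw [h1, h2]
  | qall X φ ih =>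
      intro V W h; simp only [Sat, freeVars] at *
      constructor
      · intro hall U hU
        rw [← ih (fun y => if y ∈ X then U y else V y) U ?_]
        · exact hall _ (fun q hq => by simp [hq])
        · intro x hx
          by_cases hxX : x ∈ X
          · simp [hxX]
          · have h1 := hU x hxX
            have h2 := h x (Finset.mem_sdiff.2 ⟨hx, hxX⟩)
            simp only [hxX, if_false]
            rw [h1, ← h2]
      · intro hall U hU
        rw [← ih (fun y => if y ∈ X then U y else W y) U ?_]
        · exact hall _ (fun q hq => by simp [hq])
        · intro x hx
          by_cases hxX : x ∈ X
          · simp [hxX]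
          · have h1 := hU x hxX
            have h2 := h x (Finset.mem_sdiff.2 ⟨hx, hxX⟩)
            simp only [hxX, if_false]
            rw [h1, h2]

lemma sat_bigAnd (V : ℕ → Bool) : ∀ (l : List Fml), Sat V (bigAnd l) ↔ ∀ χ ∈ l, Sat V χ := by
  intro l
  induction l with
  | nil => simp [bigAnd, Sat]
  | cons a t ih =>
      cases t with
      | nil => simp [bigAnd]
      | cons b t' =>
          simp only [bigAnd, Sat] at *
          rw [ih]; simp [List.forall_mem_cons]

end Fml
namespace Fml

/-- Boolean truth value of a formula (classically). -/
noncomputable def satB (V : ℕ → Bool) (ψ : Fml) : Bool :=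
  @decide (Sat V ψ) (Classical.propDecidable _)

lemma satB_eq_true {V : ℕ → Bool} {ψ : Fml} : satB V ψ = true ↔ Sat V ψ := by
  simp [satB]

lemma mem_foldr_union {α : Type*} (f : α → Finset ℕ) (l : List α) (a : ℕ) :
    a ∈ (l.map f).foldr (· ∪ ·) ∅ ↔ ∃ x ∈ l, a ∈ f x := by
  induction l with
  | nil => simp
  | cons b t ih => simp [ih]

lemma find?_eq_of_nodup_keys : ∀ (L : List (ℕ × Fml)) (e : ℕ × Fml), e ∈ L →
    (L.map Prod.fst).Nodup → L.find? (fun e' => e'.1 == e.1) = some e := by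
  intro L
  induction L with
  | nil => intro e he; simp at he
  | cons a t ih =>
      intro e he hnd
      simp only [List.map_cons, List.nodup_cons] at hnd
      rcases List.mem_cons.1 he with rfl | het
      · simp [List.find?_cons_of_pos]
      · have hne : (a.1 == e.1) = false := by
          simp only [beq_eq_false_iff_ne, ne_eq]
          intro hx
          exact hnd.1 (hx ▸ List.mem_map_of_mem (f := Prod.fst) het)
        rw [List.find?_cons_of_neg (by simp [hne]), ih e het hnd.2]

/-- The valuation induced by a substitution. -/
noncomputable def liftVal (σ : List (ℕ × Fml)) (V : ℕ → Bool) : ℕ → Bool :=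
  fun y => ((σ.find? (fun e => e.1 == y)).map (fun e => satB V e.2)).getD (V y)

/-- Semantics of substitution into a boolean formula. -/
lemma sat_simSubst_bool : ∀ (β : Fml), isBool β = true → ∀ (σ : List (ℕ × Fml)) (V : ℕ → Bool),
    Sat V (simSubst σ β) ↔ Sat (liftVal σ V) β := by
  intro β
  induction β with
  | var p =>
      intro _ σ V
      simp only [simSubst, Sat, liftVal]
      cases h : σ.find? (fun e => e.1 == p) with
      | none => simp [Sat]
      | some e => simp [satB_eq_true]
  | tru => intro _ σ V; simp [simSubst, Sat]
  | fls => intro _ σ V; simp [simSubst, Sat]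
  | neg φ ih => intro hb σ V; simp only [simSubst, Sat, isBool] at *; rw [ih hb]
  | conj φ ψ ih1 ih2 =>
      intro hb σ V; simp only [simSubst, Sat, isBool, Bool.and_eq_true] at *
      rw [ih1 hb.1, ih2 hb.2]
  | disj φ ψ ih1 ih2 =>
      intro hb σ V; simp only [simSubst, Sat, isBool, Bool.and_eq_true] at *
      rw [ih1 hb.1, ih2 hb.2]
  | imp φ ψ ih1 ih2 =>
      intro hb σ V; simp only [simSubst, Sat, isBool, Bool.and_eq_true] at *
      rw [ih1 hb.1, ih2 hb.2]
  | biff φ ψ ih1 ih2 =>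
      intro hb σ V; simp only [simSubst, Sat, isBool, Bool.and_eq_true] at *
      rw [ih1 hb.1, ih2 hb.2]
  | qex X φ ih => intro hb; simp [isBool] at hb
  | qall X φ ih => intro hb; simp [isBool] at hb

lemma isBool_iff_md_eq_zero : ∀ ψ : Fml, isBool ψ = true ↔ md ψ = 0 := by
  intro ψ
  induction ψ with
  | var p => simp [isBool, md]
  | tru => simp [isBool, md]
  | fls => simp [isBool, md]
  | neg φ ih => simpa [isBool, md] using ih
  | conj φ ψ ih1 ih2 => simp [isBool, md, Nat.max_eq_zero_iff, ih1, ih2]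
  | disj φ ψ ih1 ih2 => simp [isBool, md, Nat.max_eq_zero_iff, ih1, ih2]
  | imp φ ψ ih1 ih2 => simp [isBool, md, Nat.max_eq_zero_iff, ih1, ih2]
  | biff φ ψ ih1 ih2 => simp [isBool, md, Nat.max_eq_zero_iff, ih1, ih2]
  | qex X φ ih => simp [isBool, md]
  | qall X φ ih => simp [isBool, md]

lemma md_simSubst_le : ∀ (ψ : Fml) (σ : List (ℕ × Fml)), (∀ e ∈ σ, md e.2 = 0) →
    md (simSubst σ ψ) ≤ md ψ := by
  intro ψ
  induction ψ with
  | var p =>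
      intro σ h
      simp only [simSubst]
      cases hf : σ.find? (fun e => e.1 == p) with
      | none => simp [md]
      | some e =>
          have := h e (List.mem_of_find?_eq_some hf)
          simp [this]
  | tru => intro σ h; simp [simSubst, md]
  | fls => intro σ h; simp [simSubst, md]
  | neg φ ih => intro σ h; simpa [simSubst, md] using ih σ h
  | conj φ ψ ih1 ih2 =>
      intro σ h; simp only [simSubst, md]
      exact max_le_max (ih1 σ h) (ih2 σ h)
  | disj φ ψ ih1 ih2 =>
      intro σ h; simp only [simSubst, md]
      exact max_le_max (ih1 σ h) (ih2 σ h)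
  | imp φ ψ ih1 ih2 =>
      intro σ h; simp only [simSubst, md]
      exact max_le_max (ih1 σ h) (ih2 σ h)
  | biff φ ψ ih1 ih2 =>
      intro σ h; simp only [simSubst, md]
      exact max_le_max (ih1 σ h) (ih2 σ h)
  | qex X φ ih =>
      intro σ h; simp only [simSubst, md]
      have := ih (σ.filter (fun e => decide (e.1 ∉ X))) (fun e he => h e (List.mem_of_mem_filter he))
      omega
  | qall X φ ih =>
      intro σ h; simp only [simSubst, md]
      have := ih (σ.filter (fun e => decide (e.1 ∉ X))) (fun e he => h e (List.mem_of_mem_filter he))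
      omega

lemma md_bigAnd_le {n : ℕ} : ∀ (l : List Fml), (∀ χ ∈ l, md χ ≤ n) → md (bigAnd l) ≤ n := by
  intro l
  induction l with
  | nil => intro _; simp [bigAnd, md]
  | cons a t ih =>
      intro h
      cases t with
      | nil => simpa [bigAnd] using h a (by simp)
      | cons b t' =>
          simp only [bigAnd, md, max_le_iff]
          exact ⟨h a (by simp), ih (fun χ hχ => h χ (List.mem_cons_of_mem _ hχ))⟩

lemma sat_qex_union (A B : Finset ℕ) (χ : Fml) (V : ℕ → Bool) :
    Sat V (qex (A ∪ B) χ) ↔ Sat V (qex A (qex B χ)) := by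
  simp only [Sat]
  constructor
  · rintro ⟨W, hW, hs⟩
    refine ⟨fun y => if y ∈ A then W y else V y, fun q hq => by simp [hq], W, ?_, hs⟩
    intro q hq
    by_cases hqA : q ∈ A
    · simp [hqA]
    · simp only [hqA, if_false]
      exact hW q (by simp [hqA, hq])
  · rintro ⟨W1, h1, W, h2, hs⟩
    refine ⟨W, ?_, hs⟩
    intro q hq
    simp only [Finset.mem_union, not_or] at hq
    rw [h2 q hq.2, h1 q hq.1]

lemma sat_qall_union (A B : Finset ℕ) (χ : Fml) (V : ℕ → Bool) :
    Sat V (qall (A ∪ B) χ) ↔ Sat V (qall A (qall B χ)) := by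
  simp only [Sat]
  constructor
  · intro h W1 h1 W h2
    refine h W ?_
    intro q hq
    simp only [Finset.mem_union, not_or] at hq
    rw [h2 q hq.2, h1 q hq.1]
  · intro h W hW
    refine h (fun y => if y ∈ A then W y else V y) (fun q hq => by simp [hq]) W ?_
    intro q hq
    by_cases hqA : q ∈ A
    · simp [hqA]
    · simp only [hqA, if_false]
      exact hW q (by simp [hqA, hq])

lemma sat_qApply_union (Q : Quant) (A B : Finset ℕ) (χ : Fml) (V : ℕ → Bool) :
    Sat V (qApply Q (A ∪ B) χ) ↔ Sat V (qApply Q A (qApply Q B χ)) := by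
  cases Q
  · exact sat_qex_union A B χ V
  · exact sat_qall_union A B χ V

lemma equiv_qApply_congr {χ χ' : Fml} (Q : Quant) (X : Finset ℕ) (h : Equiv χ χ') :
    Equiv (qApply Q X χ) (qApply Q X χ') := by
  intro V
  cases Q <;> simp only [qApply, Sat]
  · exact exists_congr (fun W => and_congr_right (fun _ => h W))
  · exact forall_congr' (fun W => imp_congr_right (fun _ => h W))

lemma equiv_qApply_fresh {χ : Fml} (Q : Quant) (X : Finset ℕ)
    (h : ∀ x ∈ X, x ∉ freeVars χ) : Equiv (qApply Q X χ) χ := by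
  intro V
  cases Q <;> simp only [qApply, Sat]
  · constructor
    · rintro ⟨W, hW, hs⟩
      rw [sat_coincidence χ V W (fun x hx => (hW x (fun hxX => h x hxX hx)).symm)]
      exact hs
    · intro hs; exact ⟨V, fun _ _ => rfl, hs⟩
  · constructor
    · intro hall; exact hall V (fun _ _ => rfl)
    · intro hs W hW
      rw [sat_coincidence χ W V (fun x hx => hW x (fun hxX => h x hxX hx))]
      exact hs

end Fml
namespace Fml

lemma freeVars_simSubst_subset : ∀ (ψ : Fml) (σ : List (ℕ × Fml)),
    freeVars (simSubst σ ψ) ⊆ freeVars ψ ∪ (σ.map (fun e => freeVars e.2)).foldr (· ∪ ·) ∅ := by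
  intro ψ
  induction ψ with
  | var p =>
      intro σ
      simp only [simSubst]
      cases hf : σ.find? (fun e => e.1 == p) with
      | none => simp [freeVars]
      | some e =>
          intro y hy
          simp only [Option.map_some, Option.getD_some] at hy
          exact Finset.mem_union_right _ ((mem_foldr_union _ σ y).2
            ⟨e, List.mem_of_find?_eq_some hf, hy⟩)
  | tru => intro σ; simp [simSubst, freeVars]
  | fls => intro σ; simp [simSubst, freeVars]
  | neg φ ih => intro σ; simpa [simSubst, freeVars] using ih σ
  | conj φ ψ ih1 ih2 =>
      intro σ y hy
      simp only [simSubst, freeVars, Finset.mem_union] at hy ⊢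
      rcases hy with hy | hy
      · rcases Finset.mem_union.1 (ih1 σ hy) with h | h
        · exact Or.inl (Or.inl h)
        · exact Or.inr h
      · rcases Finset.mem_union.1 (ih2 σ hy) with h | h
        · exact Or.inl (Or.inr h)
        · exact Or.inr h
  | disj φ ψ ih1 ih2 =>
      intro σ y hy
      simp only [simSubst, freeVars, Finset.mem_union] at hy ⊢
      rcases hy with hy | hy
      · rcases Finset.mem_union.1 (ih1 σ hy) with h | h
        · exact Or.inl (Or.inl h)
        · exact Or.inr h
      · rcases Finset.mem_union.1 (ih2 σ hy) with h | h
        · exact Or.inl (Or.inr h)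
        · exact Or.inr h
  | imp φ ψ ih1 ih2 =>
      intro σ y hy
      simp only [simSubst, freeVars, Finset.mem_union] at hy ⊢
      rcases hy with hy | hy
      · rcases Finset.mem_union.1 (ih1 σ hy) with h | h
        · exact Or.inl (Or.inl h)
        · exact Or.inr h
      · rcases Finset.mem_union.1 (ih2 σ hy) with h | h
        · exact Or.inl (Or.inr h)
        · exact Or.inr h
  | biff φ ψ ih1 ih2 =>
      intro σ y hy
      simp only [simSubst, freeVars, Finset.mem_union] at hy ⊢
      rcases hy with hy | hy
      · rcases Finset.mem_union.1 (ih1 σ hy) with h | h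
        · exact Or.inl (Or.inl h)
        · exact Or.inr h
      · rcases Finset.mem_union.1 (ih2 σ hy) with h | h
        · exact Or.inl (Or.inr h)
        · exact Or.inr h
  | qex X φ ih =>
      intro σ y hy
      simp only [simSubst, freeVars, Finset.mem_sdiff] at hy
      rcases Finset.mem_union.1 (ih _ hy.1) with h | h
      · exact Finset.mem_union_left _ (Finset.mem_sdiff.2 ⟨h, hy.2⟩)
      · rcases (mem_foldr_union _ _ y).1 h with ⟨e, he, hye⟩
        exact Finset.mem_union_right _ ((mem_foldr_union _ σ y).2
          ⟨e, List.mem_of_mem_filter he, hye⟩)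
  | qall X φ ih =>
      intro σ y hy
      simp only [simSubst, freeVars, Finset.mem_sdiff] at hy
      rcases Finset.mem_union.1 (ih _ hy.1) with h | h
      · exact Finset.mem_union_left _ (Finset.mem_sdiff.2 ⟨h, hy.2⟩)
      · rcases (mem_foldr_union _ _ y).1 h with ⟨e, he, hye⟩
        exact Finset.mem_union_right _ ((mem_foldr_union _ σ y).2
          ⟨e, List.mem_of_mem_filter he, hye⟩)

lemma vars_entry_subset_of_mem : ∀ (β : Fml), isBool β = true →
    ∀ (σ : List (ℕ × Fml)) (p : ℕ) (e : ℕ × Fml), p ∈ vars β →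
    σ.find? (fun e' => e'.1 == p) = some e → vars e.2 ⊆ vars (simSubst σ β) := by
  intro β
  induction β with
  | var q =>
      intro _ σ p e hp hf
      simp only [vars, Finset.mem_singleton] at hp
      subst hp
      simp [simSubst, hf]
  | tru => intro _ σ p e hp; simp [vars] at hp
  | fls => intro _ σ p e hp; simp [vars] at hp
  | neg φ ih => intro hb σ p e hp hf; exact ih hb σ p e hp hf
  | conj φ ψ ih1 ih2 =>
      intro hb σ p e hp hf
      simp only [isBool, Bool.and_eq_true] at hb
      simp only [vars, Finset.mem_union] at hp
      rcases hp with hp | hp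
      · exact (ih1 hb.1 σ p e hp hf).trans (by simp [simSubst, vars, Finset.subset_union_left])
      · exact (ih2 hb.2 σ p e hp hf).trans (by simp [simSubst, vars, Finset.subset_union_right])
  | disj φ ψ ih1 ih2 =>
      intro hb σ p e hp hf
      simp only [isBool, Bool.and_eq_true] at hb
      simp only [vars, Finset.mem_union] at hp
      rcases hp with hp | hp
      · exact (ih1 hb.1 σ p e hp hf).trans (by simp [simSubst, vars, Finset.subset_union_left])
      · exact (ih2 hb.2 σ p e hp hf).trans (by simp [simSubst, vars, Finset.subset_union_right])
  | imp φ ψ ih1 ih2 =>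
      intro hb σ p e hp hf
      simp only [isBool, Bool.and_eq_true] at hb
      simp only [vars, Finset.mem_union] at hp
      rcases hp with hp | hp
      · exact (ih1 hb.1 σ p e hp hf).trans (by simp [simSubst, vars, Finset.subset_union_left])
      · exact (ih2 hb.2 σ p e hp hf).trans (by simp [simSubst, vars, Finset.subset_union_right])
  | biff φ ψ ih1 ih2 =>
      intro hb σ p e hp hf
      simp only [isBool, Bool.and_eq_true] at hb
      simp only [vars, Finset.mem_union] at hp
      rcases hp with hp | hp
      · exact (ih1 hb.1 σ p e hp hf).trans (by simp [simSubst, vars, Finset.subset_union_left])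
      · exact (ih2 hb.2 σ p e hp hf).trans (by simp [simSubst, vars, Finset.subset_union_right])
  | qex X φ ih => intro hb; simp [isBool] at hb
  | qall X φ ih => intro hb; simp [isBool] at hb

lemma mem_vars_simSubst_of_not_key : ∀ (β : Fml), isBool β = true →
    ∀ (σ : List (ℕ × Fml)) (y : ℕ), y ∈ vars β →
    σ.find? (fun e' => e'.1 == y) = none → y ∈ vars (simSubst σ β) := by
  intro β
  induction β with
  | var q =>
      intro _ σ y hy hf
      simp only [vars, Finset.mem_singleton] at hy
      subst hy
      simp [simSubst, hf, vars]
  | tru => intro _ σ y hy; simp [vars] at hy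
  | fls => intro _ σ y hy; simp [vars] at hy
  | neg φ ih => intro hb σ y hy hf; exact ih hb σ y hy hf
  | conj φ ψ ih1 ih2 =>
      intro hb σ y hy hf
      simp only [isBool, Bool.and_eq_true] at hb
      simp only [vars, Finset.mem_union] at hy
      simp only [simSubst, vars, Finset.mem_union]
      rcases hy with hy | hy
      · exact Or.inl (ih1 hb.1 σ y hy hf)
      · exact Or.inr (ih2 hb.2 σ y hy hf)
  | disj φ ψ ih1 ih2 =>
      intro hb σ y hy hf
      simp only [isBool, Bool.and_eq_true] at hb
      simp only [vars, Finset.mem_union] at hy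
      simp only [simSubst, vars, Finset.mem_union]
      rcases hy with hy | hy
      · exact Or.inl (ih1 hb.1 σ y hy hf)
      · exact Or.inr (ih2 hb.2 σ y hy hf)
  | imp φ ψ ih1 ih2 =>
      intro hb σ y hy hf
      simp only [isBool, Bool.and_eq_true] at hb
      simp only [vars, Finset.mem_union] at hy
      simp only [simSubst, vars, Finset.mem_union]
      rcases hy with hy | hy
      · exact Or.inl (ih1 hb.1 σ y hy hf)
      · exact Or.inr (ih2 hb.2 σ y hy hf)
  | biff φ ψ ih1 ih2 =>
      intro hb σ y hy hf
      simp only [isBool, Bool.and_eq_true] at hb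
      simp only [vars, Finset.mem_union] at hy
      simp only [simSubst, vars, Finset.mem_union]
      rcases hy with hy | hy
      · exact Or.inl (ih1 hb.1 σ y hy hf)
      · exact Or.inr (ih2 hb.2 σ y hy hf)
  | qex X φ ih => intro hb; simp [isBool] at hb
  | qall X φ ih => intro hb; simp [isBool] at hb

lemma find?_rename_mem {K : List ℕ} {c : ℕ → ℕ} {q : ℕ} (hq : q ∈ K) :
    (K.map (fun x => (x, var (c x)))).find? (fun e => e.1 == q) = some (q, var (c q)) := by
  induction K with
  | nil => simp at hq
  | cons a t ih =>
      by_cases hab : a = q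
      · subst hab; simp [List.find?_cons_of_pos]
      · rcases List.mem_cons.1 hq with h | h
        · exact absurd h.symm hab
        · simp only [List.map_cons]
          rw [List.find?_cons_of_neg (by simp [hab]), ih h]

lemma find?_rename_not_mem {K : List ℕ} {c : ℕ → ℕ} {q : ℕ} (hq : q ∉ K) :
    (K.map (fun x => (x, var (c x)))).find? (fun e => e.1 == q) = none := by
  induction K with
  | nil => simp
  | cons a t ih =>
      simp only [List.mem_cons, not_or] at hq
      simp only [List.map_cons]
      rw [List.find?_cons_of_neg (by simp; exact fun h => hq.1 h.symm), ih hq.2]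

lemma filter_rename (K : List ℕ) (c : ℕ → ℕ) (Y : Finset ℕ) :
    (K.map (fun x => (x, var (c x)))).filter (fun e => decide (e.1 ∉ Y)) =
      (K.filter (fun x => decide (x ∉ Y))).map (fun x => (x, var (c x))) := by
  induction K with
  | nil => simp
  | cons a t ih =>
      simp only [List.map_cons, List.filter_cons, decide_not]
      simp only [decide_not] at ih
      by_cases ha : a ∈ Y <;> simp [ha, ih]

/-- Semantics of renaming substitutions. -/
lemma sat_rename : ∀ (ψ : Fml) (K : List ℕ) (c : ℕ → ℕ) (V : ℕ → Bool),
    (∀ x ∈ K, c x ∉ vars ψ) → (∀ x ∈ K, c x ∉ K) →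
    (Sat V (simSubst (K.map (fun x => (x, var (c x)))) ψ) ↔
     Sat (fun y => if y ∈ K then V (c y) else V y) ψ) := by
  intro ψ
  induction ψ with
  | var q =>
      intro K c V _ _
      by_cases hq : q ∈ K
      · simp only [simSubst, find?_rename_mem hq, Option.map_some, Option.getD_some, Sat, hq,
          if_true]
      · simp only [simSubst, find?_rename_not_mem hq, Option.map_none, Option.getD_none, Sat, hq,
          if_false]
  | tru => intro K c V _ _; simp [simSubst, Sat]
  | fls => intro K c V _ _; simp [simSubst, Sat]
  | neg φ ih => intro K c V h1 h2; simp only [simSubst, Sat]; rw [ih K c V h1 h2]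
  | conj φ ψ ih1 ih2 =>
      intro K c V h1 h2; simp only [simSubst, Sat, vars] at h1 ⊢
      rw [ih1 K c V (fun x hx => fun hv => h1 x hx (Finset.mem_union_left _ hv)) h2,
          ih2 K c V (fun x hx => fun hv => h1 x hx (Finset.mem_union_right _ hv)) h2]
  | disj φ ψ ih1 ih2 =>
      intro K c V h1 h2; simp only [simSubst, Sat, vars] at h1 ⊢
      rw [ih1 K c V (fun x hx => fun hv => h1 x hx (Finset.mem_union_left _ hv)) h2,
          ih2 K c V (fun x hx => fun hv => h1 x hx (Finset.mem_union_right _ hv)) h2]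
  | imp φ ψ ih1 ih2 =>
      intro K c V h1 h2; simp only [simSubst, Sat, vars] at h1 ⊢
      rw [ih1 K c V (fun x hx => fun hv => h1 x hx (Finset.mem_union_left _ hv)) h2,
          ih2 K c V (fun x hx => fun hv => h1 x hx (Finset.mem_union_right _ hv)) h2]
  | biff φ ψ ih1 ih2 =>
      intro K c V h1 h2; simp only [simSubst, Sat, vars] at h1 ⊢
      rw [ih1 K c V (fun x hx => fun hv => h1 x hx (Finset.mem_union_left _ hv)) h2,
          ih2 K c V (fun x hx => fun hv => h1 x hx (Finset.mem_union_right _ hv)) h2]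
  | qex Y χ ih =>
      intro K c V h1 h2
      have hcY : ∀ x ∈ K, c x ∉ Y := fun x hx hv =>
        h1 x hx (by simp [vars, Finset.mem_union, hv])
      have hcχ : ∀ x ∈ K, c x ∉ vars χ := fun x hx hv =>
        h1 x hx (by simp [vars, Finset.mem_union, hv])
      set K' := K.filter (fun x => decide (x ∉ Y)) with hK'
      have hsubK' : ∀ x, x ∈ K' → x ∈ K := fun x hx => List.mem_of_mem_filter hx
      have ihK' := fun (W : ℕ → Bool) => ih K' c W
        (fun x hx => hcχ x (hsubK' x hx))
        (fun x hx hxK' => h2 x (hsubK' x hx) (hsubK' _ hxK'))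
      simp only [simSubst, Sat, filter_rename, ← hK']
      constructor
      · rintro ⟨W, hW, hs⟩
        refine ⟨fun y => if y ∈ K' then W (c y) else W y, ?_, ?_⟩
        · intro q hq
          by_cases hqK' : q ∈ K'
          · have hqK := hsubK' q hqK'
            simp only [hqK', if_true, hqK, if_true]
            exact hW (c q) (hcY q hqK)
          · simp only [hqK', if_false]
            by_cases hqK : q ∈ K
            · exact absurd (List.mem_filter.2 ⟨hqK, by simpa using hq⟩) hqK'
            · simp only [hqK, if_false]
              exact hW q hq
        · exact (ihK' W).1 hs
      · rintro ⟨W2, hW2, hs⟩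
        refine ⟨fun y => if y ∈ Y then W2 y else V y, fun q hq => by simp [hq], ?_⟩
        rw [ihK']
        rw [sat_coincidence χ _ W2 ?_]
        · exact hs
        · intro y hy
          by_cases hyK' : y ∈ K'
          · have hyK := hsubK' y hyK'
            have hyY : y ∉ Y := by
              have := List.of_mem_filter hyK'
              simpa using this
            have hcyY : c y ∉ Y := hcY y hyK
            simp only [hyK', if_true, hcyY, if_false]
            rw [hW2 y hyY]
            simp [hyK]
          · simp only [hyK', if_false]
            by_cases hyY : y ∈ Y
            · simp [hyY]
            · have hyK : y ∉ K := fun hyK =>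
                hyK' (List.mem_filter.2 ⟨hyK, by simpa using hyY⟩)
              simp only [hyY, if_false]
              rw [hW2 y hyY]
              simp [hyK]
  | qall Y χ ih =>
      intro K c V h1 h2
      have hcY : ∀ x ∈ K, c x ∉ Y := fun x hx hv =>
        h1 x hx (by simp [vars, Finset.mem_union, hv])
      have hcχ : ∀ x ∈ K, c x ∉ vars χ := fun x hx hv =>
        h1 x hx (by simp [vars, Finset.mem_union, hv])
      set K' := K.filter (fun x => decide (x ∉ Y)) with hK'
      have hsubK' : ∀ x, x ∈ K' → x ∈ K := fun x hx => List.mem_of_mem_filter hx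
      have ihK' := fun (W : ℕ → Bool) => ih K' c W
        (fun x hx => hcχ x (hsubK' x hx))
        (fun x hx hxK' => h2 x (hsubK' x hx) (hsubK' _ hxK'))
      simp only [simSubst, Sat, filter_rename, ← hK']
      constructor
      · intro hall W2 hW2
        have hs := hall (fun y => if y ∈ Y then W2 y else V y) (fun q hq => by simp [hq])
        rw [ihK'] at hs
        rw [sat_coincidence χ _ W2 ?_] at hs
        · exact hs
        · intro y hy
          by_cases hyK' : y ∈ K'
          · have hyK := hsubK' y hyK'
            have hyY : y ∉ Y := by
              have := List.of_mem_filter hyK'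
              simpa using this
            have hcyY : c y ∉ Y := hcY y hyK
            simp only [hyK', if_true, hcyY, if_false]
            rw [hW2 y hyY]
            simp [hyK]
          · simp only [hyK', if_false]
            by_cases hyY : y ∈ Y
            · simp [hyY]
            · have hyK : y ∉ K := fun hyK =>
                hyK' (List.mem_filter.2 ⟨hyK, by simpa using hyY⟩)
              simp only [hyY, if_false]
              rw [hW2 y hyY]
              simp [hyK]
      · intro hall W hW
        rw [ihK']
        refine hall (fun y => if y ∈ K' then W (c y) else W y) ?_
        intro q hq
        by_cases hqK' : q ∈ K'
        · have hqK := hsubK' q hqK'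
          simp only [hqK', if_true, hqK, if_true]
          exact hW (c q) (hcY q hqK)
        · simp only [hqK', if_false]
          by_cases hqK : q ∈ K
          · exact absurd (List.mem_filter.2 ⟨hqK, by simpa using hq⟩) hqK'
          · simp only [hqK, if_false]
            exact hW q hq

end Fml
namespace OneLevelData

open Fml

variable {φ : Fml}

/-- The substitution association list of a decomposition. -/
def σl (D : OneLevelData φ) : List (ℕ × Fml) := D.L.map (fun e => (e.1, entryFml e))

lemma vars_entryFml (e : ℕ × Quant × Finset ℕ × Fml) :
    vars (entryFml e) = e.2.2.1 ∪ vars e.2.2.2 := by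
  rcases e with ⟨p, q, X, ψ⟩
  cases q <;> rfl

lemma freeVars_entryFml (e : ℕ × Quant × Finset ℕ × Fml) :
    freeVars (entryFml e) = freeVars e.2.2.2 \ e.2.2.1 := by
  rcases e with ⟨p, q, X, ψ⟩
  cases q <;> rfl

lemma mem_enum_iff_get' {α : Type*} {l : List α} {i : ℕ} {x : α} :
    (i, x) ∈ l.zipIdx.map Prod.swap ↔ l[i]? = some x := by
  rw [List.mem_map]
  constructor
  · rintro ⟨⟨y, j⟩, hm, he⟩
    simp only [Prod.swap_prod_mk, Prod.mk.injEq] at he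
    obtain ⟨rfl, rfl⟩ := he
    exact List.mem_zipIdx_iff_getElem?.1 hm
  · intro h
    exact ⟨(x, i), List.mem_zipIdx_iff_getElem?.2 h, rfl⟩

lemma mem_enum' {α : Type*} {l : List α} {i : ℕ} {x : α} (h : l[i]? = some x) :
    (i, x) ∈ l.zipIdx.map Prod.swap := mem_enum_iff_get'.2 h

lemma mem_opt_get {L : List (ℕ × Quant × Finset ℕ × Fml)} {i : ℕ}
    {e : ℕ × Quant × Finset ℕ × Fml} (h : L[i]? = some e) : e ∈ L[i]? := by
  rw [h]; rfl

lemma mem_Nset (D : OneLevelData φ) {y : ℕ} :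
    y ∈ D.Nset ↔ ∃ i : ℕ, ∃ e, D.L[i]? = some e ∧ ∃ x ∈ e.2.2.1, D.negC i x = y := by
  unfold Nset
  rw [mem_foldr_union]
  constructor
  · rintro ⟨⟨i, e⟩, hmem, hy⟩
    rw [mem_enum_iff_get'] at hmem
    rcases Finset.mem_image.1 hy with ⟨x, hx, hxy⟩
    exact ⟨i, e, hmem, x, hx, hxy⟩
  · rintro ⟨i, e, hget, x, hx, hxy⟩
    exact ⟨(i, e), mem_enum' hget, Finset.mem_image.2 ⟨x, hx, hxy⟩⟩

lemma mem_Pset (D : OneLevelData φ) {y : ℕ} :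
    y ∈ D.Pset ↔ ∃ i : ℕ, ∃ e, D.L[i]? = some e ∧ (e.1 = y ∨ ∃ x ∈ e.2.2.1, D.posC i x = y) := by
  unfold Pset
  rw [mem_foldr_union]
  constructor
  · rintro ⟨⟨i, e⟩, hmem, hy⟩
    rw [mem_enum_iff_get'] at hmem
    rcases Finset.mem_union.1 hy with hy | hy
    · rcases Finset.mem_image.1 hy with ⟨x, hx, hxy⟩
      exact ⟨i, e, hmem, Or.inr ⟨x, hx, hxy⟩⟩
    · exact ⟨i, e, hmem, Or.inl (Finset.mem_singleton.1 hy).symm⟩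
  · rintro ⟨i, e, hget, hy | ⟨x, hx, hxy⟩⟩
    · exact ⟨(i, e), mem_enum' hget,
        Finset.mem_union_right _ (Finset.mem_singleton.2 hy.symm)⟩
    · exact ⟨(i, e), mem_enum' hget,
        Finset.mem_union_left _ (Finset.mem_image.2 ⟨x, hx, hxy⟩)⟩

lemma Nset_fresh (D : OneLevelData φ) {y : ℕ} (h : y ∈ D.Nset) : y ∉ vars φ := by
  rcases D.mem_Nset.1 h with ⟨i, e, hget, x, hx, rfl⟩
  exact (D.hcfresh i e (mem_opt_get hget) x hx).2.1

lemma Pset_fresh (D : OneLevelData φ) {y : ℕ} (h : y ∈ D.Pset) : y ∉ vars φ := by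
  rcases D.mem_Pset.1 h with ⟨i, e, hget, hy | ⟨x, hx, rfl⟩⟩
  · exact hy ▸ D.hpnotin e (List.mem_of_getElem? hget)
  · exact (D.hcfresh i e (mem_opt_get hget) x hx).1

lemma σl_keys_nodup (D : OneLevelData φ) : (D.σl.map Prod.fst).Nodup := by
  have : D.σl.map Prod.fst = D.L.map (fun e => e.1) := by
    simp [σl, List.map_map, Function.comp]
  rw [this]; exact D.hnodup

lemma find?_σl (D : OneLevelData φ) {i : ℕ} {e : ℕ × Quant × Finset ℕ × Fml}
    (hget : D.L[i]? = some e) :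
    D.σl.find? (fun e' => e'.1 == e.1) = some (e.1, entryFml e) := by
  exact find?_eq_of_nodup_keys D.σl (e.1, entryFml e)
    (List.mem_map_of_mem (List.mem_of_getElem? hget)) D.σl_keys_nodup

lemma find?_σl_none (D : OneLevelData φ) {y : ℕ} (h : y ∈ vars φ) :
    D.σl.find? (fun e' => e'.1 == y) = none := by
  rw [List.find?_eq_none]
  rintro ⟨p, χ⟩ hmem
  rcases List.mem_map.1 hmem with ⟨e, he, heq⟩
  have hpe : p = e.1 := by simpa using congrArg Prod.fst heq.symm
  subst hpe
  have : e.1 ≠ y := fun hpy => D.hpnotin e he (hpy ▸ h)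
  simpa using this

lemma key_inj (D : OneLevelData φ) {i j : ℕ} {e e' : ℕ × Quant × Finset ℕ × Fml}
    (hi : D.L[i]? = some e) (hj : D.L[j]? = some e') (hk : e.1 = e'.1) :
    i = j ∧ e = e' := by
  have hmi : (D.L.map (fun e => e.1))[i]? = some e.1 := by
    rw [List.getElem?_map, hi]; rfl
  have hmj : (D.L.map (fun e => e.1))[j]? = some e'.1 := by
    rw [List.getElem?_map, hj]; rfl
  have hlen : i < (D.L.map (fun e => e.1)).length := (List.getElem?_eq_some_iff.1 hmi).1
  have hij : i = j := (List.getElem?_inj hlen D.hnodup).1 (by rw [hmi, hmj, hk])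
  subst hij
  exact ⟨rfl, by rw [hi] at hj; exact Option.some_injective _ hj⟩

lemma sat_iff_liftVal (D : OneLevelData φ) (V : ℕ → Bool) :
    Sat V φ ↔ Sat (liftVal D.σl V) D.β := by
  conv_lhs => rw [D.hdec]
  exact sat_simSubst_bool D.β D.hbool D.σl V

lemma good_of_mem_vars_β (D : OneLevelData φ) {i : ℕ} {e : ℕ × Quant × Finset ℕ × Fml}
    (hget : D.L[i]? = some e) (hβ : e.1 ∈ vars D.β) : vars (entryFml e) ⊆ vars φ := by
  have := vars_entry_subset_of_mem D.β D.hbool D.σl e.1 (e.1, entryFml e) hβ (D.find?_σl hget)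
  rw [D.hdec]
  exact this

lemma vars_β_cases (D : OneLevelData φ) {y : ℕ} (hy : y ∈ vars D.β) :
    (∃ i : ℕ, ∃ e, D.L[i]? = some e ∧ e.1 = y) ∨ y ∈ vars φ := by
  by_cases h : ∃ e ∈ D.L, e.1 = y
  · rcases h with ⟨e, he, hey⟩
    rcases List.mem_iff_getElem?.1 he with ⟨i, hi⟩
    exact Or.inl ⟨i, e, hi, hey⟩
  · right
    push_neg at h
    have hnone : D.σl.find? (fun e' => e'.1 == y) = none := by
      rw [List.find?_eq_none]
      rintro ⟨p, χ⟩ hmem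
      rcases List.mem_map.1 hmem with ⟨e, he, heq⟩
      have : p = e.1 := by simpa using congrArg Prod.fst heq.symm
      subst this
      simpa using h e he
    rw [D.hdec]
    exact mem_vars_simSubst_of_not_key D.β D.hbool D.σl y hy hnone

lemma le_foldr_max : ∀ (l : List ℕ) (a : ℕ), a ∈ l → a ≤ l.foldr max 0 := by
  intro l
  induction l with
  | nil => intro a ha; simp at ha
  | cons b t ih =>
      intro a ha
      rcases List.mem_cons.1 ha with rfl | ha
      · simp [List.foldr_cons]
      · exact le_trans (ih a ha) (by simp [List.foldr_cons])

lemma md_entry_le (D : OneLevelData φ) {e : ℕ × Quant × Finset ℕ × Fml} (he : e ∈ D.L) :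
    1 + md e.2.2.2 ≤ md φ := by
  rw [D.hmd]
  exact le_foldr_max _ _ (List.mem_map_of_mem he)

lemma md_TQ_le (D : OneLevelData φ) (Q : Quant) (n : ℕ) (h : md φ ≤ n + 1) :
    md (TQ Q D) ≤ n := by
  have hβ : md D.β = 0 := (isBool_iff_md_eq_zero D.β).1 D.hbool
  have hC : md D.constraints ≤ n := by
    unfold constraints
    simp only [md, max_le_iff]
    constructor
    · apply md_bigAnd_le
      rintro χ hχ
      rcases List.mem_map.1 hχ with ⟨⟨i, e⟩, hmem, rfl⟩
      rw [mem_enum_iff_get'] at hmem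
      dsimp only
      simp only [md, max_le_iff]
      refine ⟨by omega, ?_⟩
      have h1 : md (D.renameEntry i e) ≤ md e.2.2.2 := by
        apply md_simSubst_le
        rintro a ha
        rcases List.mem_map.1 ha with ⟨x, hx, rfl⟩
        rfl
      have h2 : 1 + md e.2.2.2 ≤ md φ := D.md_entry_le (List.mem_of_getElem? hmem)
      omega
    · apply md_bigAnd_le
      rintro χ hχ
      rcases List.mem_map.1 hχ with ⟨⟨i, e⟩, hmem, rfl⟩
      dsimp only
      have : md (D.linkEntry i e) ≤ 0 := by
        unfold linkEntry
        rcases e with ⟨p, q, X, ψ⟩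
        cases q <;>
        · simp only [md, max_le_iff]
          refine ⟨le_refl _, ?_⟩
          apply md_bigAnd_le
          rintro χ' hχ'
          rcases List.mem_map.1 hχ' with ⟨x, hx, rfl⟩
          simp [md]
      omega
  have hQ : md (TQ Q D) = max (md D.constraints) (md D.β) := by cases Q <;> rfl
  rw [hQ]
  omega

/-- The defining constraints, semantically. -/
def DefsOK (D : OneLevelData φ) (U : ℕ → Bool) : Prop :=
  ∀ (i : ℕ) e, D.L[i]? = some e → U e.1 = satB U (D.renameEntry i e)

/-- The linking constraints, semantically. -/
def LinksOK (D : OneLevelData φ) (U : ℕ → Bool) : Prop :=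
  ∀ (i : ℕ) e, D.L[i]? = some e →
    ((e.2.1 = Quant.qex ∧ U e.1 = false) ∨ (e.2.1 = Quant.qall ∧ U e.1 = true)) →
    ∀ x ∈ e.2.2.1, U (D.posC i x) = U (D.negC i x)

lemma sat_biff_vars {U : ℕ → Bool} {a b : ℕ} :
    Sat U (biff (var a) (var b)) ↔ U a = U b := by
  simp only [Sat]
  constructor
  · intro h
    rcases Bool.eq_false_or_eq_true (U a) with ha | ha <;>
      rcases Bool.eq_false_or_eq_true (U b) with hb | hb <;> simp_all
  · intro h; rw [h]

lemma sat_linkEntry_qex (D : OneLevelData φ) (U : ℕ → Bool) (i : ℕ) (p : ℕ) (X : Finset ℕ)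
    (ψ : Fml) :
    Sat U (D.linkEntry i (p, Quant.qex, X, ψ)) ↔
      (U p = false → ∀ x ∈ X, U (D.posC i x) = U (D.negC i x)) := by
  constructor
  · intro h hp x hx
    have h2 : Sat U (bigAnd (X.toList.map
        (fun x => biff (var (D.posC i x)) (var (D.negC i x))))) := by
      refine h ?_
      show ¬ Sat U (var p)
      simp [Sat, hp]
    rw [sat_bigAnd] at h2
    exact sat_biff_vars.1 (h2 _ (List.mem_map_of_mem (Finset.mem_toList.2 hx)))
  · intro h hnp
    rw [sat_bigAnd]
    rintro χ hχ
    rcases List.mem_map.1 hχ with ⟨x, hx, rfl⟩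
    have hp : U p = false := by
      have : ¬ Sat U (var p) := hnp
      simp only [Sat] at this
      simpa using this
    exact sat_biff_vars.2 (h hp x (Finset.mem_toList.1 hx))

lemma sat_linkEntry_qall (D : OneLevelData φ) (U : ℕ → Bool) (i : ℕ) (p : ℕ) (X : Finset ℕ)
    (ψ : Fml) :
    Sat U (D.linkEntry i (p, Quant.qall, X, ψ)) ↔
      (U p = true → ∀ x ∈ X, U (D.posC i x) = U (D.negC i x)) := by
  constructor
  · intro h hp x hx
    have h2 : Sat U (bigAnd (X.toList.map
        (fun x => biff (var (D.posC i x)) (var (D.negC i x))))) := by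
      exact h (show Sat U (var p) from hp)
    rw [sat_bigAnd] at h2
    exact sat_biff_vars.1 (h2 _ (List.mem_map_of_mem (Finset.mem_toList.2 hx)))
  · intro h hp
    rw [sat_bigAnd]
    rintro χ hχ
    rcases List.mem_map.1 hχ with ⟨x, hx, rfl⟩
    exact sat_biff_vars.2 (h hp x (Finset.mem_toList.1 hx))

lemma sat_linkEntry_iff (D : OneLevelData φ) (U : ℕ → Bool) (i : ℕ)
    (e : ℕ × Quant × Finset ℕ × Fml) :
    Sat U (D.linkEntry i e) ↔
      (((e.2.1 = Quant.qex ∧ U e.1 = false) ∨ (e.2.1 = Quant.qall ∧ U e.1 = true)) →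
        ∀ x ∈ e.2.2.1, U (D.posC i x) = U (D.negC i x)) := by
  rcases e with ⟨p, q, X, ψ⟩
  cases q
  · rw [D.sat_linkEntry_qex U i p X ψ]
    constructor
    · rintro h (⟨-, hp⟩ | ⟨hq, -⟩) x hx
      · exact h hp x hx
      · exact Quant.noConfusion hq
    · intro h hp x hx
      exact h (Or.inl ⟨rfl, hp⟩) x hx
  · rw [D.sat_linkEntry_qall U i p X ψ]
    constructor
    · rintro h (⟨hq, -⟩ | ⟨-, hp⟩) x hx
      · exact Quant.noConfusion hq
      · exact h hp x hx
    · intro h hp x hx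
      exact h (Or.inr ⟨rfl, hp⟩) x hx

lemma sat_constraints_iff (D : OneLevelData φ) (U : ℕ → Bool) :
    Sat U D.constraints ↔ D.DefsOK U ∧ D.LinksOK U := by
  unfold constraints
  simp only [Sat, sat_bigAnd]
  constructor
  · rintro ⟨hdefs, hlinks⟩
    constructor
    · intro i e hget
      have hthis := hdefs _ (List.mem_map_of_mem (mem_enum' hget))
      simp only [Sat] at hthis
      have hiff : U e.1 = true ↔ satB U (D.renameEntry i e) = true := by
        rw [satB_eq_true]; exact hthis
      rcases Bool.eq_false_or_eq_true (satB U (D.renameEntry i e)) with h2 | h2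
      · rw [h2]; exact hiff.2 h2
      · rw [h2]
        refine Bool.eq_false_iff.2 (fun h1 => ?_)
        rw [hiff.1 h1] at h2
        exact Bool.noConfusion h2
    · intro i e hget htrig x hx
      have := hlinks _ (List.mem_map_of_mem (mem_enum' hget))
      exact (D.sat_linkEntry_iff U i e).1 this htrig x hx
  · rintro ⟨hdefs, hlinks⟩
    constructor
    · intro χ hχ
      rcases List.mem_map.1 hχ with ⟨⟨i, e⟩, hmem, rfl⟩
      rw [mem_enum_iff_get'] at hmem
      have := hdefs i e hmem
      simp only [Sat]
      rw [this, satB_eq_true]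
    · intro χ hχ
      rcases List.mem_map.1 hχ with ⟨⟨i, e⟩, hmem, rfl⟩
      rw [mem_enum_iff_get'] at hmem
      exact (D.sat_linkEntry_iff U i e).2 (hlinks i e hmem)

lemma beta_transfer (D : OneLevelData φ) (V U : ℕ → Bool)
    (hagree : ∀ y ∈ vars φ, U y = V y)
    (hkeys : ∀ (i : ℕ) e, D.L[i]? = some e → e.1 ∈ vars D.β → U e.1 = satB V (entryFml e)) :
    (Sat U D.β ↔ Sat V φ) := by
  rw [D.sat_iff_liftVal V]
  apply sat_coincidence
  intro y hy
  have hyv : y ∈ vars D.β := freeVars_subset_vars D.β hy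
  rcases D.vars_β_cases hyv with ⟨i, e, hget, hey⟩ | hvφ
  · subst hey
    rw [hkeys i e hget hyv]
    simp [liftVal, D.find?_σl hget]
  · rw [hagree y hvφ]
    simp [liftVal, D.find?_σl_none hvφ]

end OneLevelData
namespace Fml

lemma satB_congr {V V' : ℕ → Bool} {ψ ψ' : Fml} (h : Sat V ψ ↔ Sat V' ψ') :
    satB V ψ = satB V' ψ' := by
  unfold satB
  exact decide_eq_decide.2 h

lemma satB_eq_false {V : ℕ → Bool} {ψ : Fml} : satB V ψ = false ↔ ¬ Sat V ψ := by
  unfold satB; simp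

end Fml

namespace OneLevelData

open Fml

variable {φ : Fml}

lemma posC_inj (D : OneLevelData φ) {i i' x x' : ℕ} {e e' : ℕ × Quant × Finset ℕ × Fml}
    (hi : D.L[i]? = some e) (hi' : D.L[i']? = some e')
    (hx : x ∈ e.2.2.1) (hx' : x' ∈ e'.2.2.1) (h : D.posC i x = D.posC i' x') :
    i = i' ∧ x = x' := by
  have := D.hcdist i i' e (mem_opt_get hi) e' (mem_opt_get hi') x hx x' hx' true true
    (by simpa using h)
  simp only [Prod.mk.injEq] at this
  exact ⟨this.1, this.2.1⟩

lemma negC_inj (D : OneLevelData φ) {i i' x x' : ℕ} {e e' : ℕ × Quant × Finset ℕ × Fml}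
    (hi : D.L[i]? = some e) (hi' : D.L[i']? = some e')
    (hx : x ∈ e.2.2.1) (hx' : x' ∈ e'.2.2.1) (h : D.negC i x = D.negC i' x') :
    i = i' ∧ x = x' := by
  have := D.hcdist i i' e (mem_opt_get hi) e' (mem_opt_get hi') x hx x' hx' false false
    (by simpa using h)
  simp only [Prod.mk.injEq] at this
  exact ⟨this.1, this.2.1⟩

lemma posC_ne_negC (D : OneLevelData φ) {i i' x x' : ℕ} {e e' : ℕ × Quant × Finset ℕ × Fml}
    (hi : D.L[i]? = some e) (hi' : D.L[i']? = some e')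
    (hx : x ∈ e.2.2.1) (hx' : x' ∈ e'.2.2.1) : D.posC i x ≠ D.negC i' x' := by
  intro h
  have := D.hcdist i i' e (mem_opt_get hi) e' (mem_opt_get hi') x hx x' hx' true false
    (by simpa using h)
  simp only [Prod.mk.injEq] at this
  exact Bool.noConfusion this.2.2

lemma posC_not_key (D : OneLevelData φ) {i x : ℕ} {e e' : ℕ × Quant × Finset ℕ × Fml}
    (hi : D.L[i]? = some e) (hx : x ∈ e.2.2.1) (he' : e' ∈ D.L) : e'.1 ≠ D.posC i x := by
  intro h
  exact (D.hcfresh i e (mem_opt_get hi) x hx).2.2.1 (h ▸ List.mem_map_of_mem he')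

lemma negC_not_key (D : OneLevelData φ) {i x : ℕ} {e e' : ℕ × Quant × Finset ℕ × Fml}
    (hi : D.L[i]? = some e) (hx : x ∈ e.2.2.1) (he' : e' ∈ D.L) : e'.1 ≠ D.negC i x := by
  intro h
  exact (D.hcfresh i e (mem_opt_get hi) x hx).2.2.2 (h ▸ List.mem_map_of_mem he')

lemma sat_renameEntry (D : OneLevelData φ) {i : ℕ} {e : ℕ × Quant × Finset ℕ × Fml}
    (hi : D.L[i]? = some e) (hgood : vars (entryFml e) ⊆ vars φ) (U : ℕ → Bool) :
    Sat U (D.renameEntry i e) ↔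
      Sat (fun y => if y ∈ e.2.2.1.toList then U (D.posC i y) else U y) e.2.2.2 := by
  unfold renameEntry
  apply sat_rename
  · intro x hx
    rw [Finset.mem_toList] at hx
    intro hv
    exact (D.hcfresh i e (mem_opt_get hi) x hx).1
      (hgood (vars_entryFml e ▸ Finset.mem_union_right _ hv))
  · intro x hx
    rw [Finset.mem_toList] at hx
    intro hv
    rw [Finset.mem_toList] at hv
    exact (D.hcfresh i e (mem_opt_get hi) x hx).1
      (hgood (vars_entryFml e ▸ Finset.mem_union_left _ hv))

/-- Evaluation of a renamed entry body under a valuation whose positive copies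
take the values `g` and which agrees with `B` on the variables of `φ`. -/
lemma rename_eval (D : OneLevelData φ) {i : ℕ} {e : ℕ × Quant × Finset ℕ × Fml}
    (hi : D.L[i]? = some e) (hgood : vars (entryFml e) ⊆ vars φ)
    (A B g : ℕ → Bool)
    (hApos : ∀ x ∈ e.2.2.1, A (D.posC i x) = g x)
    (hAout : ∀ y ∈ vars φ, A y = B y) :
    (Sat A (D.renameEntry i e) ↔
      Sat (fun y => if y ∈ e.2.2.1 then g y else B y) e.2.2.2) := by
  rw [D.sat_renameEntry hi hgood A]
  apply sat_coincidence
  intro y hy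
  by_cases hyX : y ∈ e.2.2.1
  · simp only [Finset.mem_toList, hyX, if_true]
    exact hApos y hyX
  · have hyv : y ∈ vars φ :=
      hgood (vars_entryFml e ▸ Finset.mem_union_right _ (freeVars_subset_vars _ hy))
    simp only [Finset.mem_toList, hyX, if_false]
    exact hAout y hyv

/-- The case condition for an entry: good, and either an existential entry that
is true or a universal entry that is false (under the reference valuation). -/
def Cnd (D : OneLevelData φ) (W : ℕ → Bool) (e : ℕ × Quant × Finset ℕ × Fml) : Prop :=
  vars (entryFml e) ⊆ vars φ ∧
    ((e.2.1 = Quant.qex ∧ Sat W (entryFml e)) ∨ (e.2.1 = Quant.qall ∧ ¬ Sat W (entryFml e)))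

lemma cnd_witness (D : OneLevelData φ) (W : ℕ → Bool) (e : ℕ × Quant × Finset ℕ × Fml)
    (h : D.Cnd W e) : ∃ W' : ℕ → Bool,
      (∀ q ∉ e.2.2.1, W' q = W q) ∧ (Sat W' e.2.2.2 ↔ e.2.1 = Quant.qex) := by
  rcases e with ⟨p, q, X, ψ⟩
  rcases h with ⟨-, (⟨hq, hs⟩ | ⟨hq, hs⟩)⟩
  · cases q
    · obtain ⟨W', h1, h2⟩ := hs
      exact ⟨W', h1, iff_of_true h2 rfl⟩
    · exact Quant.noConfusion hq
  · cases q
    · exact Quant.noConfusion hq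
    · have hs' : ¬ ∀ W' : ℕ → Bool, (∀ q ∉ X, W' q = W q) → Sat W' ψ := hs
      obtain ⟨W', hW'⟩ := not_forall.1 hs'
      rw [Classical.not_imp] at hW'
      exact ⟨W', hW'.1, iff_of_false hW'.2 (fun h => Quant.noConfusion h)⟩

/-- Construction lemma: given any setting `W` of the negative copies, one can
choose values for the abbreviation variables and positive copies so that all
constraints hold and the abbreviation variables take the correct values. -/
lemma CL1 (D : OneLevelData φ) (V W : ℕ → Bool) (hWV : ∀ q ∉ D.Nset, W q = V q) :
    ∃ U : ℕ → Bool, (∀ q ∉ D.Pset, U q = W q) ∧ Sat U D.constraints ∧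
      (∀ (i : ℕ) e, D.L[i]? = some e → e.1 ∈ vars D.β → U e.1 = satB V (entryFml e)) := by
  classical
  -- choose the values of the positive copies for each entry
  obtain ⟨chV, hchV1, hchV2⟩ : ∃ chV : ℕ → (ℕ × Quant × Finset ℕ × Fml) → ℕ → Bool,
      (∀ i e, D.Cnd W e → (∀ q ∉ e.2.2.1, chV i e q = W q) ∧
        (Sat (chV i e) e.2.2.2 ↔ e.2.1 = Quant.qex)) ∧
      (∀ i e, ¬ D.Cnd W e → chV i e = fun x => W (D.negC i x)) := by
    refine ⟨fun i e => if h : D.Cnd W e then (D.cnd_witness W e h).choose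
      else fun x => W (D.negC i x), ?_, ?_⟩
    · intro i e h
      dsimp only
      rw [dif_pos h]
      exact (D.cnd_witness W e h).choose_spec
    · intro i e h
      dsimp only
      rw [dif_neg h]
  -- stage 1: set the positive copies
  obtain ⟨U1, hU1pos, hU1other⟩ : ∃ U1 : ℕ → Bool,
      (∀ (i : ℕ) e x, D.L[i]? = some e → x ∈ e.2.2.1 → U1 (D.posC i x) = chV i e x) ∧
      (∀ y, (¬ ∃ i : ℕ, ∃ e x, D.L[i]? = some e ∧ x ∈ e.2.2.1 ∧ D.posC i x = y) → U1 y = W y) := by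
    refine ⟨fun y => if h : ∃ q : ℕ × (ℕ × Quant × Finset ℕ × Fml) × ℕ,
        D.L[q.1]? = some q.2.1 ∧ q.2.2 ∈ q.2.1.2.2.1 ∧ D.posC q.1 q.2.2 = y then
        chV h.choose.1 h.choose.2.1 h.choose.2.2 else W y, ?_, ?_⟩
    · intro i e x hi hx
      have hex : ∃ q : ℕ × (ℕ × Quant × Finset ℕ × Fml) × ℕ,
          D.L[q.1]? = some q.2.1 ∧ q.2.2 ∈ q.2.1.2.2.1 ∧ D.posC q.1 q.2.2 = D.posC i x :=
        ⟨⟨i, e, x⟩, hi, hx, rfl⟩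
      dsimp only
      rw [dif_pos hex]
      obtain ⟨h1, h2, h3⟩ := hex.choose_spec
      obtain ⟨hiq, hxq⟩ := D.posC_inj h1 hi h2 hx h3
      rw [hiq] at h1
      rw [hi] at h1
      have he : hex.choose.2.1 = e := Option.some_injective _ h1.symm
      rw [hiq, hxq, he]
    · intro y hy
      dsimp only
      rw [dif_neg]
      rintro ⟨q, h1, h2, h3⟩
      exact hy ⟨q.1, q.2.1, q.2.2, h1, h2, h3⟩
  -- stage 2: set the abbreviation variables
  obtain ⟨U, hUkey, hUother⟩ : ∃ U : ℕ → Bool,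
      (∀ (i : ℕ) e, D.L[i]? = some e → U e.1 = satB U1 (D.renameEntry i e)) ∧
      (∀ y, (¬ ∃ i : ℕ, ∃ e, D.L[i]? = some e ∧ e.1 = y) → U y = U1 y) := by
    refine ⟨fun y => if h : ∃ q : ℕ × (ℕ × Quant × Finset ℕ × Fml),
        D.L[q.1]? = some q.2 ∧ q.2.1 = y then
        satB U1 (D.renameEntry h.choose.1 h.choose.2) else U1 y, ?_, ?_⟩
    · intro i e hi
      have hex : ∃ q : ℕ × (ℕ × Quant × Finset ℕ × Fml),
          D.L[q.1]? = some q.2 ∧ q.2.1 = e.1 := ⟨⟨i, e⟩, hi, rfl⟩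
      dsimp only
      rw [dif_pos hex]
      obtain ⟨h1, h2⟩ := hex.choose_spec
      obtain ⟨hiq, heq⟩ := D.key_inj h1 hi h2
      rw [hiq, heq]
    · intro y hy
      dsimp only
      rw [dif_neg]
      rintro ⟨q, h1, h2⟩
      exact hy ⟨q.1, q.2, h1, h2⟩
  -- basic transfer facts
  have hU1vars : ∀ y ∈ vars φ, U1 y = W y := by
    intro y hy
    apply hU1other
    rintro ⟨i, e, x, hi, hx, rfl⟩
    exact (D.hcfresh i e (mem_opt_get hi) x hx).1 hy
  have hUnk : ∀ y, (¬ ∃ i : ℕ, ∃ e, D.L[i]? = some e ∧ e.1 = y) → U y = U1 y := hUother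
  have hUvars : ∀ y ∈ vars φ, U y = W y := by
    intro y hy
    rw [hUother y ?_, hU1vars y hy]
    rintro ⟨i, e, hi, rfl⟩
    exact D.hpnotin e (List.mem_of_getElem? hi) hy
  have hUpos : ∀ (i : ℕ) e x, D.L[i]? = some e → x ∈ e.2.2.1 → U (D.posC i x) = chV i e x := by
    intro i e x hi hx
    rw [hUother _ ?_, hU1pos i e x hi hx]
    rintro ⟨j, e', hj, hkey⟩
    exact D.posC_not_key hi hx (List.mem_of_getElem? hj) hkey
  have hUneg : ∀ (i : ℕ) e x, D.L[i]? = some e → x ∈ e.2.2.1 → U (D.negC i x) = W (D.negC i x) := by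
    intro i e x hi hx
    rw [hUother _ ?_]
    · apply hU1other
      rintro ⟨j, e', x', hj, hx', hpn⟩
      exact D.posC_ne_negC hj hi hx' hx hpn
    · rintro ⟨j, e', hj, hkey⟩
      exact D.negC_not_key hi hx (List.mem_of_getElem? hj) hkey
  -- the central evaluation of the renamed bodies
  have hcentral : ∀ (i : ℕ) e, D.L[i]? = some e → vars (entryFml e) ⊆ vars φ →
      (Sat U1 (D.renameEntry i e) ↔
        Sat (fun y => if y ∈ e.2.2.1 then chV i e y else W y) e.2.2.2) := by
    intro i e hi hgood
    exact D.rename_eval hi hgood U1 W (chV i e) (fun x hx => hU1pos i e x hi hx) hU1vars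
  -- value of the abbreviation variable of a good entry
  have hkeyval : ∀ (i : ℕ) e, D.L[i]? = some e → vars (entryFml e) ⊆ vars φ →
      U e.1 = satB W (entryFml e) := by
    intro i e hi hgood
    rw [hUkey i e hi]
    by_cases hc : D.Cnd W e
    · obtain ⟨hoff, hiff⟩ := hchV1 i e hc
      have hZ : Sat U1 (D.renameEntry i e) ↔ Sat (chV i e) e.2.2.2 := by
        rw [hcentral i e hi hgood]
        apply sat_coincidence
        intro y hy
        by_cases hyX : y ∈ e.2.2.1
        · simp [hyX]
        · simp only [hyX, if_false]
          exact (hoff y hyX).symm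
      rcases hc.2 with ⟨hq, hs⟩ | ⟨hq, hs⟩
      · have : Sat U1 (D.renameEntry i e) := hZ.2 (hiff.2 hq)
        rw [satB_congr (iff_of_true this hs)]
      · have hnot : ¬ Sat U1 (D.renameEntry i e) := by
          rw [hZ, hiff, hq]
          exact fun h => Quant.noConfusion h
        rw [satB_congr (iff_of_false hnot hs)]
    · have hch : chV i e = fun x => W (D.negC i x) := hchV2 i e hc
      have hZ := hcentral i e hi hgood
      rw [hch] at hZ
      rcases e with ⟨p, q, X, ψ⟩
      have hnc := hc
      unfold Cnd at hnc
      push_neg at hnc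
      cases q
      · -- existential entry, necessarily false
        have hs : ¬ Sat W (entryFml (p, Quant.qex, X, ψ)) := (hnc hgood).1 rfl
        have hnZ : ¬ Sat U1 (D.renameEntry i (p, Quant.qex, X, ψ)) := by
          rw [hZ]
          intro hsat
          exact hs ⟨_, fun q hq => by simp [hq], hsat⟩
        rw [satB_congr (iff_of_false hnZ hs)]
      · -- universal entry, necessarily true
        have hs : Sat W (entryFml (p, Quant.qall, X, ψ)) := (hnc hgood).2 rfl
        have hsZ : Sat U1 (D.renameEntry i (p, Quant.qall, X, ψ)) := by
          rw [hZ]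
          exact hs _ (fun q hq => by simp [hq])
        rw [satB_congr (iff_of_true hsZ hs)]
  refine ⟨U, ?_, ?_, ?_⟩
  · -- U agrees with W outside Pset
    intro q hq
    rw [hUother q ?_]
    · apply hU1other
      rintro ⟨i, e, x, hi, hx, rfl⟩
      exact hq (D.mem_Pset.2 ⟨i, e, hi, Or.inr ⟨x, hx, rfl⟩⟩)
    · rintro ⟨i, e, hi, rfl⟩
      exact hq (D.mem_Pset.2 ⟨i, e, hi, Or.inl rfl⟩)
  · -- all constraints hold
    rw [D.sat_constraints_iff]
    constructor
    · -- defining constraints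
      intro i e hi
      rw [hUkey i e hi]
      apply satB_congr
      apply sat_coincidence
      intro y hy
      symm
      apply hUother
      rintro ⟨j, e', hj, rfl⟩
      rcases Finset.mem_union.1 (freeVars_simSubst_subset e.2.2.2
          (e.2.2.1.toList.map (fun x => (x, var (D.posC i x)))) hy) with h | h
      · exact D.hpnotfree e' (List.mem_of_getElem? hj) e (List.mem_of_getElem? hi) h
      · rcases (mem_foldr_union _ _ _).1 h with ⟨a, ha, hya⟩
        rcases List.mem_map.1 ha with ⟨x, hx, rfl⟩
        simp only [freeVars, Finset.mem_singleton] at hya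
        exact D.posC_not_key hi (Finset.mem_toList.1 hx) (List.mem_of_getElem? hj) hya
    · -- linking constraints
      intro i e hi htrig x hx
      rw [hUpos i e x hi hx, hUneg i e x hi hx]
      by_cases hc : D.Cnd W e
      · -- in this case the link is never triggered
        exfalso
        obtain ⟨hoff, hiff⟩ := hchV1 i e hc
        have hgood := hc.1
        have hval := hkeyval i e hi hgood
        rcases hc.2 with ⟨hq, hs⟩ | ⟨hq, hs⟩
        · rcases htrig with ⟨-, hfalse⟩ | ⟨hqall, -⟩
          · rw [hval, satB_eq_true.2 hs] at hfalse
            exact Bool.noConfusion hfalse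
          · rw [hq] at hqall
            exact Quant.noConfusion hqall
        · rcases htrig with ⟨hqex, -⟩ | ⟨-, htrue⟩
          · rw [hq] at hqex
            exact Quant.noConfusion hqex
          · rw [hval, satB_eq_false.2 hs] at htrue
            exact Bool.noConfusion htrue
      · rw [hchV2 i e hc]
  · -- correct values of the abbreviation variables
    intro i e hi hβ
    have hgood := D.good_of_mem_vars_β hi hβ
    rw [hkeyval i e hi hgood]
    apply satB_congr
    apply sat_coincidence
    intro y hy
    have hyv : y ∈ vars φ := hgood (freeVars_subset_vars _ hy)
    exact hWV y (fun hN => D.Nset_fresh hN hyv)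

end OneLevelData
namespace OneLevelData

open Fml

variable {φ : Fml}

/-- Extraction lemma: one can choose the values of the negative copies so that
any valuation of the abbreviation variables and positive copies satisfying
the constraints gives the abbreviation variables their correct values. -/
lemma CL2 (D : OneLevelData φ) (V : ℕ → Bool) :
    ∃ W : ℕ → Bool, (∀ q ∉ D.Nset, W q = V q) ∧
      ∀ U : ℕ → Bool, (∀ q ∉ D.Pset, U q = W q) → Sat U D.constraints →
        ∀ (i : ℕ) e, D.L[i]? = some e → e.1 ∈ vars D.β → U e.1 = satB V (entryFml e) := by
  classical
  obtain ⟨chV, hchV1, hchV2⟩ : ∃ chV : ℕ → (ℕ × Quant × Finset ℕ × Fml) → ℕ → Bool,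
      (∀ i e, D.Cnd V e → (∀ q ∉ e.2.2.1, chV i e q = V q) ∧
        (Sat (chV i e) e.2.2.2 ↔ e.2.1 = Quant.qex)) ∧
      (∀ i e, ¬ D.Cnd V e → chV i e = fun x => V (D.negC i x)) := by
    refine ⟨fun i e => if h : D.Cnd V e then (D.cnd_witness V e h).choose
      else fun x => V (D.negC i x), ?_, ?_⟩
    · intro i e h
      dsimp only
      rw [dif_pos h]
      exact (D.cnd_witness V e h).choose_spec
    · intro i e h
      dsimp only
      rw [dif_neg h]
  obtain ⟨W, hWneg, hWother⟩ : ∃ W : ℕ → Bool,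
      (∀ (i : ℕ) e x, D.L[i]? = some e → x ∈ e.2.2.1 → W (D.negC i x) = chV i e x) ∧
      (∀ y, (¬ ∃ i : ℕ, ∃ e x, D.L[i]? = some e ∧ x ∈ e.2.2.1 ∧ D.negC i x = y) → W y = V y) := by
    refine ⟨fun y => if h : ∃ q : ℕ × (ℕ × Quant × Finset ℕ × Fml) × ℕ,
        D.L[q.1]? = some q.2.1 ∧ q.2.2 ∈ q.2.1.2.2.1 ∧ D.negC q.1 q.2.2 = y then
        chV h.choose.1 h.choose.2.1 h.choose.2.2 else V y, ?_, ?_⟩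
    · intro i e x hi hx
      have hex : ∃ q : ℕ × (ℕ × Quant × Finset ℕ × Fml) × ℕ,
          D.L[q.1]? = some q.2.1 ∧ q.2.2 ∈ q.2.1.2.2.1 ∧ D.negC q.1 q.2.2 = D.negC i x :=
        ⟨⟨i, e, x⟩, hi, hx, rfl⟩
      dsimp only
      rw [dif_pos hex]
      obtain ⟨h1, h2, h3⟩ := hex.choose_spec
      obtain ⟨hiq, hxq⟩ := D.negC_inj h1 hi h2 hx h3
      rw [hiq] at h1
      rw [hi] at h1
      have he : hex.choose.2.1 = e := Option.some_injective _ h1.symm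
      rw [hiq, hxq, he]
    · intro y hy
      dsimp only
      rw [dif_neg]
      rintro ⟨q, h1, h2, h3⟩
      exact hy ⟨q.1, q.2.1, q.2.2, h1, h2, h3⟩
  refine ⟨W, ?_, ?_⟩
  · intro q hq
    apply hWother
    rintro ⟨i, e, x, hi, hx, rfl⟩
    exact hq (D.mem_Nset.2 ⟨i, e, hi, x, hx, rfl⟩)
  · intro U hUP hsatC i e hi hβ
    have hgood := D.good_of_mem_vars_β hi hβ
    obtain ⟨hdefs, hlinks⟩ := (D.sat_constraints_iff U).1 hsatC
    -- U agrees with V on the variables of φ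
    have hUvars : ∀ y ∈ vars φ, U y = V y := by
      intro y hy
      rw [hUP y (fun hP => D.Pset_fresh hP hy)]
      apply hWother
      rintro ⟨j, e', x', hj, hx', rfl⟩
      exact (D.hcfresh j e' (mem_opt_get hj) x' hx').2.1 hy
    have hUneg : ∀ j e' x, D.L[j]? = some e' → x ∈ e'.2.2.1 →
        U (D.negC j x) = chV j e' x := by
      intro j e' x hj hx
      rw [hUP _ ?_, hWneg j e' x hj hx]
      intro hP
      rcases D.mem_Pset.1 hP with ⟨k, e'', hk, hkey | ⟨x'', hx'', hpn⟩⟩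
      · exact D.negC_not_key hj hx (List.mem_of_getElem? hk) hkey
      · exact D.posC_ne_negC hk hj hx'' hx hpn
    -- evaluate the renamed entry
    have hren : Sat U (D.renameEntry i e) ↔
        Sat (fun y => if y ∈ e.2.2.1 then U (D.posC i y) else V y) e.2.2.2 :=
      D.rename_eval hi hgood U V (fun x => U (D.posC i x)) (fun x _ => rfl) hUvars
    have hdef := hdefs i e hi
    rw [satB_congr hren] at hdef
    by_cases hc : D.Cnd V e
    · obtain ⟨hoff, hiff⟩ := hchV1 i e hc
      rcases hc.2 with ⟨hq, hs⟩ | ⟨hq, hs⟩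
      · -- existential, true: show U e.1 = true
        rw [satB_congr (iff_of_true hs hs : Sat V (entryFml e) ↔ Sat V (entryFml e))]
        rcases Bool.eq_false_or_eq_true (U e.1) with htrue | hfalse
        · rw [htrue, satB_eq_true.2 hs]
        · exfalso
          have hlink := hlinks i e hi (Or.inl ⟨hq, hfalse⟩)
          have hZ : Sat (fun y => if y ∈ e.2.2.1 then U (D.posC i y) else V y) e.2.2.2 := by
            rw [sat_coincidence _ _ (chV i e) ?_]
            · exact hiff.2 hq
            · intro y hy
              by_cases hyX : y ∈ e.2.2.1
              · simp only [hyX, if_true]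
                rw [hlink y hyX, hUneg i e y hi hyX]
              · simp only [hyX, if_false]
                exact (hoff y hyX).symm
          rw [hdef, satB_eq_true.2 hZ] at hfalse
          exact Bool.noConfusion hfalse
      · -- universal, false: show U e.1 = false
        rw [satB_eq_false.2 hs]
        rcases Bool.eq_false_or_eq_true (U e.1) with htrue | hfalse
        · exfalso
          have hlink := hlinks i e hi (Or.inr ⟨hq, htrue⟩)
          have hZ : Sat (fun y => if y ∈ e.2.2.1 then U (D.posC i y) else V y) e.2.2.2 := by
            rw [hdef] at htrue
            exact satB_eq_true.1 htrue
          have hsat : Sat (chV i e) e.2.2.2 := by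
            rw [sat_coincidence _ _ (chV i e) ?_] at hZ
            · exact hZ
            · intro y hy
              by_cases hyX : y ∈ e.2.2.1
              · simp only [hyX, if_true]
                rw [hlink y hyX, hUneg i e y hi hyX]
              · simp only [hyX, if_false]
                exact (hoff y hyX).symm
          rw [hiff, hq] at hsat
          exact Quant.noConfusion hsat
        · exact hfalse
    · have hnc := hc
      unfold Cnd at hnc
      push_neg at hnc
      rcases e with ⟨p, q, X, ψ⟩
      cases q
      · -- existential, false
        have hs : ¬ Sat V (entryFml (p, Quant.qex, X, ψ)) := (hnc hgood).1 rfl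
        rw [satB_eq_false.2 hs, hdef, satB_eq_false]
        intro hZ
        exact hs ⟨_, fun q hq => by simp [hq], hZ⟩
      · -- universal, true
        have hs : Sat V (entryFml (p, Quant.qall, X, ψ)) := (hnc hgood).2 rfl
        rw [satB_eq_true.2 hs, hdef, satB_eq_true]
        exact hs _ (fun q hq => by simp [hq])

end OneLevelData
namespace OneLevelData

open Fml

variable {φ : Fml}

/-- Correctness of the one-level transformation. -/
lemma one_level (D : OneLevelData φ) (Q : Quant) :
    Equiv (qApply Q D.Nset (qApply Q.dual D.Pset (TQ Q D))) φ := by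
  intro V
  have hagree : ∀ (W U : ℕ → Bool), (∀ q ∉ D.Nset, W q = V q) → (∀ q ∉ D.Pset, U q = W q) →
      ∀ y ∈ vars φ, U y = V y := by
    intro W U hW hU y hy
    rw [hU y (fun hP => D.Pset_fresh hP hy), hW y (fun hN => D.Nset_fresh hN hy)]
  cases Q
  · show Sat V (qex D.Nset (qall D.Pset (imp D.constraints D.β))) ↔ Sat V φ
    constructor
    · rintro ⟨W, hW, hall⟩
      obtain ⟨U, hUP, hUC, hUkeys⟩ := D.CL1 V W hW
      have hUβ : Sat U D.β := (hall U hUP) hUC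
      exact (D.beta_transfer V U (hagree W U hW hUP) hUkeys).1 hUβ
    · intro hφ
      obtain ⟨W, hWN, hmain⟩ := D.CL2 V
      refine ⟨W, hWN, ?_⟩
      intro U hUP hUC
      exact (D.beta_transfer V U (hagree W U hWN hUP) (hmain U hUP hUC)).2 hφ
  · show Sat V (qall D.Nset (qex D.Pset (conj D.constraints D.β))) ↔ Sat V φ
    constructor
    · intro hall
      obtain ⟨W, hWN, hmain⟩ := D.CL2 V
      obtain ⟨U, hUP, hUC, hUβ⟩ := hall W hWN
      exact (D.beta_transfer V U (hagree W U hWN hUP) (hmain U hUP hUC)).1 hUβ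
    · intro hφ W hWN
      obtain ⟨U, hUP, hUC, hUkeys⟩ := D.CL1 V W hWN
      exact ⟨U, hUP, hUC, (D.beta_transfer V U (hagree W U hWN hUP) hUkeys).2 hφ⟩

end OneLevelData

open Fml OneLevelData in
lemma tr_equiv (D : ∀ ψ : Fml, OneLevelData ψ) :
    ∀ (n : ℕ) (Q : Quant) (φ : Fml), md φ ≤ n →
      Equiv (qApply Q (Nset (D φ)) (tr D n Q φ)) φ := by
  intro n
  induction n with
  | zero =>
      intro Q φ _
      show Equiv (qApply Q (Nset (D φ)) φ) φ
      apply equiv_qApply_fresh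
      intro x hx hfv
      exact (D φ).Nset_fresh hx (freeVars_subset_vars φ hfv)
  | succ n ih =>
      intro Q φ hmd
      by_cases hb : φ.isBool
      · have htr : tr D (n+1) Q φ = φ := by simp [tr, hb]
        rw [htr]
        apply equiv_qApply_fresh
        intro x hx hfv
        exact (D φ).Nset_fresh hx (freeVars_subset_vars φ hfv)
      · have htr : tr D (n+1) Q φ = qApply Q.dual (Pset (D φ) ∪ Nset (D (TQ Q (D φ))))
            (tr D n Q.dual (TQ Q (D φ))) := by simp [tr, hb]
        rw [htr]
        have hmdψ : md (TQ Q (D φ)) ≤ n := (D φ).md_TQ_le Q n hmd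
        have IH := ih Q.dual (TQ Q (D φ)) hmdψ
        have e1 : Equiv
            (qApply Q.dual (Pset (D φ) ∪ Nset (D (TQ Q (D φ)))) (tr D n Q.dual (TQ Q (D φ))))
            (qApply Q.dual (Pset (D φ))
              (qApply Q.dual (Nset (D (TQ Q (D φ)))) (tr D n Q.dual (TQ Q (D φ))))) :=
          fun W => sat_qApply_union Q.dual _ _ _ W
        have e3 : Equiv
            (qApply Q.dual (Pset (D φ) ∪ Nset (D (TQ Q (D φ)))) (tr D n Q.dual (TQ Q (D φ))))
            (qApply Q.dual (Pset (D φ)) (TQ Q (D φ))) :=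
          fun W => (e1 W).trans (equiv_qApply_congr Q.dual (Pset (D φ)) IH W)
        have e4 := equiv_qApply_congr Q (Nset (D φ)) e3
        have e5 := (D φ).one_level Q
        exact fun V => (e4 V).trans (e5 V)
open Fml OneLevelData in
/-- correctness of the full prenexing transformation: for every
QBF `φ` and `Q ∈ {∃,∀}` (and any choice `D` of one-level decompositions),
`Q N(φ) tr^Q(φ) ≡ φ`; consequently `φ` and `tr^∃(φ)` are equisatisfiable
and `φ` and `tr^∀(φ)` are equivalid. -/
theorem tr_correct (D : ∀ ψ : Fml, OneLevelData ψ) (Q : Quant) (φ : Fml) :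
    Equiv (qApply Q (Nset (D φ)) (trQ D Q φ)) φ ∧
    ((∃ V : ℕ → Bool, Sat V (trQ D Quant.qex φ)) ↔ (∃ V : ℕ → Bool, Sat V φ)) ∧
    ((∀ V : ℕ → Bool, Sat V (trQ D Quant.qall φ)) ↔ (∀ V : ℕ → Bool, Sat V φ)) := by
  have hmain : ∀ Q' : Quant, Equiv (qApply Q' (Nset (D φ)) (trQ D Q' φ)) φ :=
    fun Q' => tr_equiv D (md φ) Q' φ le_rfl
  refine ⟨hmain Q, ?_, ?_⟩
  · constructor
    · rintro ⟨V, hV⟩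
      exact ⟨V, (hmain Quant.qex V).1 ⟨V, fun _ _ => rfl, hV⟩⟩
    · rintro ⟨V, hV⟩
      obtain ⟨W, -, hW⟩ := (hmain Quant.qex V).2 hV
      exact ⟨W, hW⟩
  · constructor
    · intro h V
      exact (hmain Quant.qall V).1 (fun W _ => h W)
    · intro h V
      exact (hmain Quant.qall V).2 (h V) V (fun _ _ => rfl)
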